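/- Fix n ≥ 2, let G be a graph, ω a placement function on G, and f : V(G) → V(C) satisfying (C1) and (C2). Let w_0,…,w_k be a wrapping pattern in G. Then exactly one of the following holds: (a) there exist ℓ ∈ {1,…,n} and j ≥ 0 such that f(w_p) = C(ℓ, j+p) for all p ∈ {0,…,k}; or (b) there exist ℓ ∈ {1,…,n} and j ≥ k such that f(w_p) = C(ℓ, j−p) for all p ∈ {0,…,k}; or (c) there exist distinct ℓ₁, ℓ₂ ∈ {1,…,n} and j₁, j₂ ≥ 1 with j₁ + j₂ ≤ k such that f(w_p) = C(ℓ₁, j₁−p) for all p ∈ {0,…,j₁}, f(w_{k−p}) = C(ℓ₂, j₂−p) for all p ∈ {0,…,j₂}, and for every p with j₁ − 1 ≤ p ≤ k − j₂ + 1: if p − j₁ is odd then f(w_p) = C(ℓ_p, 1) for some ℓ_p ∈ {1,…,n} and these ℓ_p are pairwise distinct, while if p − j₁ is even then f(w_p) = C(·,0). (Here C(ℓ,0) denotes the branch vertex C(·,0).) -/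

import Mathlib

/-- Vertices of the infinite n-od graph `C`: a branch vertex, and nodes `C(ℓ,j)`
(intended for `1 ≤ ℓ ≤ n`, `j ≥ 1`). -/
inductive NOdVert : Type where
  | branch : NOdVert
  | node : ℕ → ℕ → NOdVert
deriving DecidableEq

/-- `cv ℓ j` denotes the vertex `C(ℓ,j)`, where `C(ℓ,0)` is the branch vertex. -/
def cv (ℓ j : ℕ) : NOdVert := if j = 0 then NOdVert.branch else NOdVert.node ℓ j

/-- Adjacency in the infinite n-od `C`: `C(ℓ,j)` is adjacent to `C(ℓ,j+1)` for
`1 ≤ ℓ ≤ n` and `j ≥ 0` (the case `j = 0` gives branch–`C(ℓ,1)` edges). -/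
def nodAdj (n : ℕ) (u v : NOdVert) : Prop :=
  ∃ ℓ j, 1 ≤ ℓ ∧ ℓ ≤ n ∧
    ((u = cv ℓ j ∧ v = cv ℓ (j + 1)) ∨ (v = cv ℓ j ∧ u = cv ℓ (j + 1)))

/-- The point `b(i,t) = ((1+t)cos(iπ/n), (1+t)sin(iπ/n))` in the plane. -/
noncomputable def bpt (n i : ℕ) (t : ℝ) : ℝ × ℝ :=
  ((1 + t) * Real.cos (i * Real.pi / n), (1 + t) * Real.sin (i * Real.pi / n))

/-- The origin `o` of the plane. -/
def origin : ℝ × ℝ := (0, 0)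

/-- A placement function: on each edge of `G`, one endpoint maps to `o` and the
other to some `b(i,t)` with `i ∈ {0,…,n}`, `t ∈ [0,1]`. -/
def IsPlacement {V : Type*} (n : ℕ) (G : SimpleGraph V) (ω : V → ℝ × ℝ) : Prop :=
  ∀ u v, G.Adj u v →
    (ω u = origin ∧ ∃ i ≤ n, ∃ t ∈ Set.Icc (0 : ℝ) 1, ω v = bpt n i t) ∨
    (ω v = origin ∧ ∃ i ≤ n, ∃ t ∈ Set.Icc (0 : ℝ) 1, ω u = bpt n i t)

/-- Condition (C1). -/
def CondC1 {V : Type*} (n : ℕ) (ω : V → ℝ × ℝ) (f : V → NOdVert) : Prop :=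
  ∀ u v, f u = f v →
    (ω u = origin ∧ ω v = origin) ∨
    ∃ i ≤ n, ∃ s ∈ Set.Icc (0 : ℝ) 1, ∃ t ∈ Set.Icc (0 : ℝ) 1,
      ω u = bpt n i s ∧ ω v = bpt n i t

/-- Condition (C2): `f` maps adjacent vertices of `G` to adjacent vertices of `C`. -/
def CondC2 {V : Type*} (n : ℕ) (G : SimpleGraph V) (f : V → NOdVert) : Prop :=
  ∀ u v, G.Adj u v → nodAdj n (f u) (f v)

/-- `w 0, …, w k` is a wrapping pattern in `G` for the placement function `ω`. -/
def IsWrapping {V : Type*} (n : ℕ) (G : SimpleGraph V) (ω : V → ℝ × ℝ)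
    (w : ℕ → V) (k : ℕ) : Prop :=
  0 < k ∧ 2 * (n + 1) ∣ k ∧
  (∀ p < k, G.Adj (w p) (w (p + 1))) ∧
  (∀ q, 2 * q ≤ k → ∃ t ∈ Set.Icc (0 : ℝ) 1, ω (w (2 * q)) = bpt n (q % (n + 1)) t) ∧
  (∀ q, 2 * q + 1 ≤ k → ω (w (2 * q + 1)) = origin)

/-- The branch-star of `C`: the branch vertex together with `C(ℓ,1)`, `1 ≤ ℓ ≤ n`. -/
def branchStar (n : ℕ) : Set NOdVert :=
  {NOdVert.branch} ∪ {x | ∃ ℓ, 1 ≤ ℓ ∧ ℓ ≤ n ∧ x = NOdVert.node ℓ 1}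

/-- Alternative (a): the wrapping pattern goes away from the branch on leg `ℓ`. -/
def WrapAway {V : Type*} (n : ℕ) (f : V → NOdVert) (w : ℕ → V) (k : ℕ) : Prop :=
  ∃ ℓ, 1 ≤ ℓ ∧ ℓ ≤ n ∧ ∃ j, ∀ p ≤ k, f (w p) = cv ℓ (j + p)

/-- Alternative (b): the wrapping pattern goes toward the branch on leg `ℓ`. -/
def WrapToward {V : Type*} (n : ℕ) (f : V → NOdVert) (w : ℕ → V) (k : ℕ) : Prop :=
  ∃ ℓ, 1 ≤ ℓ ∧ ℓ ≤ n ∧ ∃ j, k ≤ j ∧ ∀ p ≤ k, f (w p) = cv ℓ (j - p)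

/-- Alternative (c): the wrapping pattern goes across the branch from leg `ℓ₁` to
leg `ℓ₂`, with a branch-star trajectory in between. -/
def WrapAcross {V : Type*} (n : ℕ) (f : V → NOdVert) (w : ℕ → V) (k : ℕ) : Prop :=
  ∃ ℓ₁ ℓ₂, 1 ≤ ℓ₁ ∧ ℓ₁ ≤ n ∧ 1 ≤ ℓ₂ ∧ ℓ₂ ≤ n ∧ ℓ₁ ≠ ℓ₂ ∧
    ∃ j₁ j₂, 1 ≤ j₁ ∧ 1 ≤ j₂ ∧ j₁ + j₂ ≤ k ∧
      (∀ p ≤ j₁, f (w p) = cv ℓ₁ (j₁ - p)) ∧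
      (∀ p ≤ j₂, f (w (k - p)) = cv ℓ₂ (j₂ - p)) ∧
      ∃ L : ℕ → ℕ,
        (∀ p, j₁ - 1 ≤ p → p ≤ k - j₂ + 1 →
          ((p + j₁) % 2 = 1 → 1 ≤ L p ∧ L p ≤ n ∧ f (w p) = NOdVert.node (L p) 1) ∧
          ((p + j₁) % 2 = 0 → f (w p) = NOdVert.branch)) ∧
        (∀ p q, j₁ - 1 ≤ p → p ≤ k - j₂ + 1 → j₁ - 1 ≤ q → q ≤ k - j₂ + 1 →
          (p + j₁) % 2 = 1 → (q + j₁) % 2 = 1 → p ≠ q → L p ≠ L q)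


/-!
Under `f` the wrapping pattern becomes a walk `x p = f (w p)` in the n-od. By (C1) the walk
can revisit a vertex only after an even number of steps, and the image of `w (2q)`, placed at
`b(q mod (n+1), ·)`, only after `2(n+1)` steps. As `n ≥ 2`, this prevents the walk from
turning back at any vertex `C(ℓ,j)`: it turns only at the branch vertex. So it runs straight
along one leg if it never meets the branch vertex; otherwise it descends a leg to its first
visit of the branch vertex, then alternates between the branch vertex and vertices `C(ℓ,1)`
until its last visit, and finally climbs a leg. The vertices `C(ℓ,1)` of the alternating
stretch sit at positions of equal parity; by pigeonhole over the `n` legs the stretch is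
shorter than `2(n+1)` steps, so they are pairwise distinct.
-/

lemma bpt_ne_origin (n i : ℕ) {t : ℝ} (ht : t ≠ -1) : bpt n i t ≠ origin := by
  have h1 : 1 + t ≠ 0 := fun h => ht (by linarith)
  intro h
  obtain ⟨hc, hs⟩ := Prod.ext_iff.mp h
  simp only [bpt, origin, mul_eq_zero, h1, false_or] at hc hs
  have := Real.sin_sq_add_cos_sq (i * Real.pi / n)
  rw [hc, hs] at this
  norm_num at this

lemma arg_bpt {n i : ℕ} (hn : 0 < n) (hi : i ≤ n) {t : ℝ} (ht : -1 < t) :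
    Complex.arg ((bpt n i t).1 + (bpt n i t).2 * Complex.I) = i * Real.pi / n := by
  have hθ : (i : ℝ) * Real.pi / n ∈ Set.Ioc (-Real.pi) Real.pi := by
    have hi' : (i : ℝ) ≤ n := by exact_mod_cast hi
    have hn' : (0 : ℝ) < n := by exact_mod_cast hn
    constructor
    · have : 0 ≤ (i : ℝ) * Real.pi / n := by positivity
      linarith [Real.pi_pos]
    · rw [div_le_iff₀ hn']
      nlinarith [Real.pi_pos]
  rw [← Complex.arg_mul_cos_add_sin_mul_I (by linarith : (0 : ℝ) < 1 + t) hθ]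
  simp only [bpt]
  push_cast
  ring_nf

lemma eq_of_bpt_eq {n i i' : ℕ} (hn : 0 < n) (hi : i ≤ n) (hi' : i' ≤ n) {s t : ℝ}
    (hs : -1 < s) (ht : -1 < t) (h : bpt n i s = bpt n i' t) : i = i' := by
  have := congrArg (fun z : ℝ × ℝ => Complex.arg (z.1 + z.2 * Complex.I)) h
  simp only [arg_bpt hn hi hs, arg_bpt hn hi' ht] at this
  have hn' : (n : ℝ) ≠ 0 := by exact_mod_cast hn.ne'
  rw [div_left_inj' hn', mul_left_inj' Real.pi_ne_zero] at this
  exact_mod_cast this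

lemma cv_zero (ℓ : ℕ) : cv ℓ 0 = .branch := rfl

lemma cv_of_ne_zero (ℓ : ℕ) {j : ℕ} (hj : j ≠ 0) : cv ℓ j = .node ℓ j := if_neg hj

lemma cv_eq_branch_iff {ℓ j : ℕ} : cv ℓ j = .branch ↔ j = 0 := by
  unfold cv; split_ifs <;> simp_all

lemma eq_of_cv_eq {a b ℓ ℓ' : ℕ} (h : cv ℓ a = cv ℓ' b) : a = b := by
  unfold cv at h; split_ifs at h <;> simp_all

lemma cv_eq_node_iff {a b ℓ j : ℕ} :
    cv a b = .node ℓ j ↔ b ≠ 0 ∧ a = ℓ ∧ b = j := by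
  unfold cv; split_ifs <;> simp_all

/-- The leg `ℓ` of `C(ℓ,j)`; junk value `0` at the branch vertex. -/
def NOdVert.leg : NOdVert → ℕ
  | .branch => 0
  | .node ℓ _ => ℓ

namespace nodAdj

variable {n : ℕ} {u v : NOdVert}

lemma symm (h : nodAdj n u v) : nodAdj n v u := by
  obtain ⟨ℓ, j, h1, h2, hc⟩ := h
  exact ⟨ℓ, j, h1, h2, hc.symm⟩

lemma exists_node_of_ne_branch (h : nodAdj n u v) (hu : u ≠ .branch) :
    ∃ ℓ j, 1 ≤ ℓ ∧ ℓ ≤ n ∧ j ≠ 0 ∧ u = .node ℓ j := by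
  obtain ⟨ℓ, j, h1, h2, ⟨rfl, -⟩ | ⟨-, rfl⟩⟩ := h
  · have hj : j ≠ 0 := fun hj => hu (cv_eq_branch_iff.mpr hj)
    exact ⟨ℓ, j, h1, h2, hj, cv_of_ne_zero ℓ hj⟩
  · exact ⟨ℓ, j + 1, h1, h2, j.succ_ne_zero, cv_of_ne_zero ℓ j.succ_ne_zero⟩

lemma eq_node_one_of_branch (h : nodAdj n .branch v) :
    ∃ ℓ, 1 ≤ ℓ ∧ ℓ ≤ n ∧ v = .node ℓ 1 := by
  obtain ⟨ℓ, j, h1, h2, ⟨hu, rfl⟩ | ⟨-, hu⟩⟩ := h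
  · obtain rfl := cv_eq_branch_iff.mp hu.symm
    exact ⟨ℓ, h1, h2, rfl⟩
  · exact absurd (cv_eq_branch_iff.mp hu.symm) j.succ_ne_zero

lemma of_node {ℓ j : ℕ} (h : nodAdj n (.node ℓ j) v) :
    v = .node ℓ (j + 1) ∨ v = cv ℓ (j - 1) := by
  obtain ⟨a, b, -, -, ⟨hu, rfl⟩ | ⟨rfl, hu⟩⟩ := h
  · obtain ⟨-, rfl, rfl⟩ := cv_eq_node_iff.mp hu.symm
    exact .inl (cv_of_ne_zero _ b.succ_ne_zero)
  · obtain ⟨-, rfl, rfl⟩ := cv_eq_node_iff.mp hu.symm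
    exact .inr rfl

end nodAdj

/-- What (C1) and (C2) say about the image `x p = f (w p)` of a wrapping pattern: a walk in
`C` that revisits a vertex only after an even number of steps, and the image of an even
position (placed at `b(q mod (n+1), ·)`) only after at least `2(n+1)` steps. -/
structure IsWrappingWalk (n : ℕ) (x : ℕ → NOdVert) (k : ℕ) : Prop where
  two_dvd : 2 ∣ k
  adj : ∀ p < k, nodAdj n (x p) (x (p + 1))
  mod_two_eq : ∀ p q, p ≤ k → q ≤ k → x p = x q → p % 2 = q % 2
  odd_of_eq : ∀ p q, p < q → q ≤ k → q < p + 2 * (n + 1) → x p = x q → p % 2 = 1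

section Wrapping

variable {V : Type*} {n k : ℕ} {G : SimpleGraph V} {ω : V → ℝ × ℝ} {f : V → NOdVert}
  {w : ℕ → V}

lemma IsWrapping.map_ne_of_even_of_odd (hw : IsWrapping n G ω w k) (h1 : CondC1 n ω f)
    {a b : ℕ} (ha : 2 * a ≤ k) (hb : 2 * b + 1 ≤ k) :
    f (w (2 * a)) ≠ f (w (2 * b + 1)) := by
  obtain ⟨-, -, -, heven, hodd⟩ := hw
  intro he
  obtain ⟨t, ht, hwa⟩ := heven a ha
  rcases h1 _ _ he with ⟨ho, -⟩ | ⟨i, -, s, -, u, hu, -, hwb⟩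
  · exact bpt_ne_origin _ _ (by linarith [ht.1]) (hwa.symm.trans ho)
  · exact bpt_ne_origin _ _ (by linarith [hu.1]) (hwb.symm.trans (hodd b hb))

lemma IsWrapping.mod_eq_of_map_eq (hn : 0 < n) (hw : IsWrapping n G ω w k)
    (h1 : CondC1 n ω f) {a b : ℕ} (ha : 2 * a ≤ k) (hb : 2 * b ≤ k)
    (he : f (w (2 * a)) = f (w (2 * b))) : a % (n + 1) = b % (n + 1) := by
  obtain ⟨-, -, -, heven, -⟩ := hw
  obtain ⟨t, ht, hwa⟩ := heven a ha
  obtain ⟨t', ht', hwb⟩ := heven b hb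
  have hmod : ∀ c, c % (n + 1) ≤ n := fun c => Nat.le_of_lt_succ (Nat.mod_lt _ n.succ_pos)
  rcases h1 _ _ he with ⟨ho, -⟩ | ⟨i, hi, s, hs, u, hu, hwa', hwb'⟩
  · exact absurd (hwa.symm.trans ho) (bpt_ne_origin _ _ (by linarith [ht.1]))
  · rw [← eq_of_bpt_eq hn hi (hmod a) (by linarith [hs.1]) (by linarith [ht.1])
      (hwa'.symm.trans hwa), ← eq_of_bpt_eq hn hi (hmod b) (by linarith [hu.1])
      (by linarith [ht'.1]) (hwb'.symm.trans hwb)]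

theorem IsWrapping.isWrappingWalk (hn : 0 < n) (hw : IsWrapping n G ω w k)
    (h1 : CondC1 n ω f) (h2 : CondC2 n G f) : IsWrappingWalk n (fun p => f (w p)) k where
  two_dvd := (Dvd.intro _ rfl).trans hw.2.1
  adj p hp := h2 _ _ (hw.2.2.1 p hp)
  mod_two_eq p q hp hq he := by
    obtain ⟨a, rfl | rfl⟩ := Nat.even_or_odd' p <;>
      obtain ⟨b, rfl | rfl⟩ := Nat.even_or_odd' q
    · omega
    · exact absurd he (hw.map_ne_of_even_of_odd h1 hp hq)
    · exact absurd he.symm (hw.map_ne_of_even_of_odd h1 hq hp)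
    · omega
  odd_of_eq p q hpq hq hqp he := by
    obtain ⟨a, rfl | rfl⟩ := Nat.even_or_odd' p
    · exfalso
      obtain ⟨b, rfl | rfl⟩ := Nat.even_or_odd' q
      · have hab := hw.mod_eq_of_map_eq hn h1 (by omega) hq he
        have := Nat.le_of_dvd (by omega) ((Nat.modEq_iff_dvd' (by omega)).mp hab)
        omega
      · exact hw.map_ne_of_even_of_odd h1 (by omega) hq he
    · omega

end Wrapping

namespace IsWrappingWalk

variable {n k : ℕ} {x : ℕ → NOdVert}

lemma reverse (hx : IsWrappingWalk n x k) : IsWrappingWalk n (fun p => x (k - p)) k where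
  two_dvd := hx.two_dvd
  adj p hp := by
    have h := hx.adj (k - (p + 1)) (by omega)
    rw [show k - (p + 1) + 1 = k - p by omega] at h
    exact h.symm
  mod_two_eq p q hp hq he := by
    have := hx.mod_two_eq _ _ (k.sub_le p) (k.sub_le q) he
    have := hx.two_dvd
    omega
  odd_of_eq p q hpq hq hqp he := by
    have := hx.odd_of_eq (k - q) (k - p) (by omega) (by omega) (by omega) he.symm
    have := hx.mod_two_eq (k - q) (k - p) (by omega) (by omega) he.symm
    have := hx.two_dvd
    omega

/-- Even `p` is excluded by `odd_of_eq`. For odd `p`, the even positions `p - 1`, `p + 1`,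
`p + 3` are less than `2(n+1)` apart (here `n ≥ 2` is needed), so they have three distinct
images, all adjacent to `x p`; but `C(ℓ,j)` has only two neighbours. -/
lemma eq_branch_of_eq_add_two (hn : 2 ≤ n) (hx : IsWrappingWalk n x k) {p : ℕ}
    (hp : p + 2 ≤ k) (he : x p = x (p + 2)) : x p = .branch := by
  by_contra hb
  have hodd := hx.odd_of_eq p (p + 2) (by omega) hp (by omega) he
  have := hx.two_dvd
  obtain ⟨ℓ, j, -, -, -, hxp⟩ := (hx.adj p (by omega)).exists_node_of_ne_branch hb
  have hne : ∀ q r, p ≤ q + 1 → q < r → r ≤ p + 3 → q % 2 = 0 → x q ≠ x r := by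
    intro q r hq' hqr hr hq he'
    have := hx.odd_of_eq q r hqr (by omega) (by omega) he'
    omega
  have h0 := (hx.adj (p - 1) (by omega)).symm
  have h1 := hx.adj p (by omega)
  have h3 := hx.adj (p + 2) (by omega)
  rw [show p - 1 + 1 = p by omega, hxp] at h0
  rw [hxp] at h1
  rw [← he, hxp] at h3
  rcases h0.of_node with h0 | h0 <;> rcases h1.of_node with h1 | h1 <;>
    rcases h3.of_node with h3 | h3
  all_goals first
    | exact hne (p - 1) (p + 1) (by omega) (by omega) (by omega) (by omega) (h0.trans h1.symm)
    | exact hne (p - 1) (p + 3) (by omega) (by omega) (by omega) (by omega) (h0.trans h3.symm)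
    | exact hne (p + 1) (p + 3) (by omega) (by omega) (by omega) (by omega) (h1.trans h3.symm)

lemma eq_cv_add_of_step_up (hn : 2 ≤ n) (hx : IsWrappingWalk n x k) {a ℓ j : ℕ}
    (hj : j ≠ 0) (h0 : x a = cv ℓ j) (h1 : x (a + 1) = cv ℓ (j + 1)) :
    ∀ s, a + s ≤ k → x (a + s) = cv ℓ (j + s) := by
  intro s
  induction s using Nat.twoStepInduction with
  | zero => exact fun _ => h0
  | one => exact fun _ => h1
  | more s ih ih' =>
    intro hs
    have hadj := hx.adj (a + (s + 1)) (by omega)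
    rw [ih' (by omega), cv_of_ne_zero ℓ (by omega)] at hadj
    rcases hadj.of_node with h | h
    · rw [cv_of_ne_zero ℓ (by omega)]
      exact h
    · rw [show j + (s + 1) - 1 = j + s by omega, ← ih (by omega)] at h
      have hb := hx.eq_branch_of_eq_add_two hn (p := a + s) (by omega) h.symm
      rw [ih (by omega), cv_eq_branch_iff] at hb
      omega

lemma eq_cv_sub_of_step_down (hn : 2 ≤ n) (hx : IsWrappingWalk n x k) {a ℓ j : ℕ}
    (h0 : x a = cv ℓ j) (h1 : x (a + 1) = cv ℓ (j - 1)) :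
    ∀ s ≤ j, a + s ≤ k → x (a + s) = cv ℓ (j - s) := by
  intro s
  induction s using Nat.twoStepInduction with
  | zero => exact fun _ _ => h0
  | one => exact fun _ _ => h1
  | more s ih ih' =>
    intro hsj hs
    have hadj := hx.adj (a + (s + 1)) (by omega)
    rw [ih' (by omega) (by omega), cv_of_ne_zero ℓ (by omega)] at hadj
    rcases hadj.of_node with h | h
    · rw [show j - (s + 1) + 1 = j - s by omega, ← cv_of_ne_zero ℓ (by omega),
        ← ih (by omega) (by omega)] at h
      have hb := hx.eq_branch_of_eq_add_two hn (p := a + s) (by omega) h.symm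
      rw [ih (by omega) (by omega), cv_eq_branch_iff] at hb
      omega
    · rwa [show j - (s + 1) - 1 = j - (s + 2) by omega] at h

lemma eq_cv_of_last_branch (hn : 2 ≤ n) (hx : IsWrappingWalk n x k) {M : ℕ}
    (hM : x M = .branch) (hMk : M < k) (hlast : ∀ p, M < p → p ≤ k → x p ≠ .branch) :
    ∃ ℓ, 1 ≤ ℓ ∧ ℓ ≤ n ∧ ∀ s, M + s ≤ k → x (M + s) = cv ℓ s := by
  have hadj := hx.adj M hMk
  rw [hM] at hadj
  obtain ⟨ℓ, hℓ1, hℓn, h1⟩ := hadj.eq_node_one_of_branch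
  refine ⟨ℓ, hℓ1, hℓn, fun s hs => ?_⟩
  rcases s with _ | _ | s
  · exact hM
  · exact h1
  · have hadj' := hx.adj (M + 1) (by omega)
    rw [h1] at hadj'
    have h2 : x (M + 1 + 1) = cv ℓ (1 + 1) := by
      rcases hadj'.of_node with h | h
      · exact h
      · exact absurd h (hlast _ (by omega) (by omega))
    convert hx.eq_cv_add_of_step_up hn one_ne_zero h1 h2 (s + 1) (by omega) using 2 <;> omega

lemma eq_cv_of_first_branch (hn : 2 ≤ n) (hx : IsWrappingWalk n x k) {m : ℕ}
    (hm : x m = .branch) (hm0 : 0 < m) (hmk : m ≤ k) (hfirst : ∀ p < m, x p ≠ .branch) :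
    ∃ ℓ, 1 ≤ ℓ ∧ ℓ ≤ n ∧ ∀ p ≤ m, x p = cv ℓ (m - p) := by
  obtain ⟨ℓ, hℓ1, hℓn, h⟩ := hx.reverse.eq_cv_of_last_branch hn (M := k - m)
    (by rwa [Nat.sub_sub_self hmk]) (by omega) fun p hp hpk => hfirst _ (by omega)
  refine ⟨ℓ, hℓ1, hℓn, fun p hp => ?_⟩
  convert h (m - p) (by omega) using 2
  omega

lemma eq_branch_add_two (hn : 2 ≤ n) (hx : IsWrappingWalk n x k) {p M : ℕ}
    (hp : x p = .branch) (hM : x M = .branch) (hpM : p < M) (hMk : M ≤ k) :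
    x (p + 2) = .branch := by
  have hpar := hx.mod_two_eq p M (by omega) hMk (hp.trans hM.symm)
  have hadj := hx.adj p (by omega)
  rw [hp] at hadj
  obtain ⟨ℓ, -, -, h1⟩ := hadj.eq_node_one_of_branch
  have hadj' := hx.adj (p + 1) (by omega)
  rw [h1] at hadj'
  rcases hadj'.of_node with h2 | h2
  · have h := hx.eq_cv_add_of_step_up hn one_ne_zero h1 h2 (M - (p + 1)) (by omega)
    rw [show p + 1 + (M - (p + 1)) = M by omega, hM, eq_comm, cv_eq_branch_iff] at h
    omega
  · exact h2

lemma eq_branch_of_mod_two_eq (hn : 2 ≤ n) (hx : IsWrappingWalk n x k) {m M : ℕ}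
    (hm : x m = .branch) (hM : x M = .branch) (hMk : M ≤ k) {p : ℕ} (hmp : m ≤ p)
    (hpM : p ≤ M) (hpar : p % 2 = m % 2) : x p = .branch := by
  suffices h : ∀ i, m + 2 * i ≤ M → x (m + 2 * i) = .branch by
    convert h ((p - m) / 2) (by omega) using 2
    omega
  intro i
  induction i with
  | zero => exact fun _ => hm
  | succ i ih =>
    intro hi
    exact hx.eq_branch_add_two hn (p := m + 2 * i) (ih (by omega)) hM (by omega) hMk

lemma eq_of_branch_of_even (hn : 2 ≤ n) (hx : IsWrappingWalk n x k) {m M : ℕ}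
    (hm : x m = .branch) (hM : x M = .branch) (hmM : m ≤ M) (hMk : M ≤ k)
    (heven : m % 2 = 0) : M = m := by
  by_contra hne
  have hpar := hx.mod_two_eq M m hMk (by omega) (hM.trans hm.symm)
  have h2 := hx.eq_branch_of_mod_two_eq hn hm hM hMk (p := m + 2) (by omega) (by omega)
    (by omega)
  have := hx.odd_of_eq m (m + 2) (by omega) (by omega) (by omega) (hm.trans h2.symm)
  omega

lemma exists_node_one_of_between (hn : 2 ≤ n) (hx : IsWrappingWalk n x k) {m M : ℕ}
    (hm : x m = .branch) (hM : x M = .branch) (hmM : m ≤ M) (hMk : M < k) {p : ℕ}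
    (hmp : m ≤ p + 1) (hpM : p ≤ M + 1) (hpar : (p + m) % 2 = 1) :
    ∃ ℓ, 1 ≤ ℓ ∧ ℓ ≤ n ∧ x p = .node ℓ 1 := by
  have hMm := hx.mod_two_eq M m (by omega) (by omega) (hM.trans hm.symm)
  by_cases hp : p < M
  · have hb := hx.eq_branch_of_mod_two_eq hn hm hM hMk.le (p := p + 1) hmp (by omega)
      (by omega)
    have hadj := hx.adj p (by omega)
    rw [hb] at hadj
    exact hadj.symm.eq_node_one_of_branch
  · obtain rfl : p = M + 1 := by omega
    have hadj := hx.adj M hMk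
    rw [hM] at hadj
    exact hadj.eq_node_one_of_branch

lemma ne_of_between (hn : 2 ≤ n) (hx : IsWrappingWalk n x k) {m M : ℕ}
    (hm : x m = .branch) (hM : x M = .branch) (hmM : m ≤ M) (hMk : M < k) {p q : ℕ}
    (hmp : m ≤ p + 1) (hpq : p < q) (hqM : q ≤ M + 1) (hqp : q < p + 2 * (n + 1))
    (hppar : (p + m) % 2 = 1) (hqpar : (q + m) % 2 = 1) : x p ≠ x q := by
  intro he
  have hodd := hx.odd_of_eq p q hpq (by omega) hqp he
  have hb1 := hx.eq_branch_of_mod_two_eq hn hm hM hMk.le (p := p + 1) hmp (by omega)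
    (by omega)
  by_cases hq : q = p + 2
  · subst hq
    obtain ⟨ℓ, -, -, hxp⟩ :=
      hx.exists_node_one_of_between hn hm hM hmM hMk hmp (by omega) hppar
    have := hx.eq_branch_of_eq_add_two hn (by omega) he
    rw [hxp] at this
    cases this
  · have hb3 := hx.eq_branch_of_mod_two_eq hn hm hM hMk.le (p := p + 3) (by omega) (by omega)
      (by omega)
    have := hx.odd_of_eq (p + 1) (p + 3) (by omega) (by omega) (by omega) (hb1.trans hb3.symm)
    omega

/-- Pigeonhole: the `n + 1` vertices `x (m - 1 + 2i)`, `i ≤ n`, would be pairwise distinct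
vertices `C(ℓ,1)`. -/
lemma add_two_lt_of_between (hn : 2 ≤ n) (hx : IsWrappingWalk n x k) {m M : ℕ}
    (hm : x m = .branch) (hM : x M = .branch) (hm0 : 0 < m) (hmM : m ≤ M) (hMk : M < k) :
    M + 2 < m + 2 * n := by
  by_contra hlt
  have hnode : ∀ i ≤ n, ∃ ℓ, 1 ≤ ℓ ∧ ℓ ≤ n ∧ x (m - 1 + 2 * i) = .node ℓ 1 :=
    fun i hi => hx.exists_node_one_of_between hn hm hM hmM hMk (by omega) (by omega) (by omega)
  obtain ⟨i, hi, i', hi', hii', heq⟩ := Finset.exists_ne_map_eq_of_card_lt_of_maps_to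
    (s := Finset.range (n + 1)) (t := Finset.Icc 1 n) (f := fun i => (x (m - 1 + 2 * i)).leg)
    (by simp) (fun i hi => by
      obtain ⟨ℓ, h1, h2, h⟩ := hnode i (by simpa [Nat.lt_succ_iff] using hi)
      simp [h, NOdVert.leg, h1, h2])
  rw [Finset.mem_range] at hi hi'
  obtain ⟨ℓ, -, -, h⟩ := hnode i (by omega)
  obtain ⟨ℓ', -, -, h'⟩ := hnode i' (by omega)
  simp only [h, h', NOdVert.leg] at heq
  subst heq
  rcases Nat.lt_or_gt_of_ne hii' with hlt | hlt
  · exact hx.ne_of_between hn hm hM hmM hMk (by omega) (by omega) (by omega) (by omega) (by omega)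
      (by omega) (h.trans h'.symm)
  · exact hx.ne_of_between hn hm hM hmM hMk (by omega) (by omega) (by omega) (by omega) (by omega)
      (by omega) (h'.trans h.symm)

theorem wrapAcross_of_branch_visits (hn : 2 ≤ n) (hx : IsWrappingWalk n x k) {m M : ℕ}
    (hm : x m = .branch) (hM : x M = .branch) (hm0 : 0 < m) (hMk : M < k)
    (hfirst : ∀ p < m, x p ≠ .branch) (hlast : ∀ p, M < p → p ≤ k → x p ≠ .branch) :
    WrapAcross n x id k := by
  have hmM : m ≤ M := by
    by_contra h
    exact hfirst M (by omega) hM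
  have hMm := hx.mod_two_eq M m (by omega) (by omega) (hM.trans hm.symm)
  obtain ⟨ℓ₁, h₁1, h₁n, hhead⟩ := hx.eq_cv_of_first_branch hn hm hm0 (by omega) hfirst
  obtain ⟨ℓ₂, h₂1, h₂n, htail⟩ := hx.eq_cv_of_last_branch hn hM hMk hlast
  have hbound := hx.add_two_lt_of_between hn hm hM hm0 hmM hMk
  have hne : ∀ p q, m - 1 ≤ p → p ≤ M + 1 → m - 1 ≤ q → q ≤ M + 1 →
      (p + m) % 2 = 1 → (q + m) % 2 = 1 → p ≠ q → x p ≠ x q := by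
    intro p q hp1 hp2 hq1 hq2 hp hq hpq
    rcases Nat.lt_or_gt_of_ne hpq with h | h
    · exact hx.ne_of_between hn hm hM hmM hMk (by omega) h hq2 (by omega) hp hq
    · exact (hx.ne_of_between hn hm hM hmM hMk (by omega) h hp2 (by omega) hq hp).symm
  refine ⟨ℓ₁, ℓ₂, h₁1, h₁n, h₂1, h₂n, ?_, m, k - M, hm0, by omega, by omega,
    hhead, fun p hp => ?_, fun p => (x p).leg,
    fun p hp1 hp2 => ⟨fun hp => ?_, fun hp => ?_⟩, fun p q hp1 hp2 hq1 hq2 hp hq hpq hL => ?_⟩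
  · rintro rfl
    refine hne (m - 1) (M + 1) le_rfl (by omega) (by omega) le_rfl (by omega) (by omega)
      (by omega) ?_
    rw [hhead _ (by omega), htail 1 (by omega), show m - (m - 1) = 1 by omega]
  · show x (k - p) = _
    convert htail (k - M - p) (by omega) using 2
    omega
  · obtain ⟨ℓ, h1, h2, h⟩ :=
      hx.exists_node_one_of_between hn hm hM hmM hMk (p := p) (by omega) (by omega) hp
    simp only [id, h, NOdVert.leg]
    exact ⟨h1, h2, trivial⟩
  · exact hx.eq_branch_of_mod_two_eq hn hm hM hMk.le (p := p) (by omega) (by omega) (by omega)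
  · obtain ⟨ℓ, -, -, h⟩ :=
      hx.exists_node_one_of_between hn hm hM hmM hMk (p := p) (by omega) (by omega) hp
    obtain ⟨ℓ', -, -, h'⟩ :=
      hx.exists_node_one_of_between hn hm hM hmM hMk (p := q) (by omega) (by omega) hq
    simp only [h, h', NOdVert.leg] at hL
    subst hL
    exact hne p q hp1 (by omega) hq1 (by omega) hp hq hpq (h.trans h'.symm)

theorem wrapAway_or_wrapToward_of_forall_ne_branch (hn : 2 ≤ n) (hx : IsWrappingWalk n x k)
    (hk : 0 < k) (hnb : ∀ p ≤ k, x p ≠ .branch) :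
    WrapAway n x id k ∨ WrapToward n x id k := by
  obtain ⟨ℓ, j, hℓ1, hℓn, hj, h0⟩ :=
    (hx.adj 0 hk).exists_node_of_ne_branch (hnb 0 k.zero_le)
  rw [← cv_of_ne_zero ℓ hj] at h0
  have hadj := hx.adj 0 hk
  rw [h0, cv_of_ne_zero ℓ hj] at hadj
  rcases hadj.of_node with h1 | h1
  · rw [← cv_of_ne_zero ℓ j.succ_ne_zero] at h1
    refine .inl ⟨ℓ, hℓ1, hℓn, j, fun p hp => ?_⟩
    simpa only [id, zero_add] using hx.eq_cv_add_of_step_up hn hj h0 h1 p (by omega)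
  · have hdesc := hx.eq_cv_sub_of_step_down hn h0 h1
    have hkj : k < j := by
      by_contra h
      apply hnb j (by omega)
      simpa only [zero_add, Nat.sub_self, cv_zero] using hdesc j le_rfl (by omega)
    refine .inr ⟨ℓ, hℓ1, hℓn, j, hkj.le, fun p hp => ?_⟩
    simpa only [id, zero_add] using hdesc p (by omega) (by omega)

theorem wrapAway_or_wrapToward_or_wrapAcross (hn : 2 ≤ n) (hx : IsWrappingWalk n x k)
    (hk : 0 < k) : WrapAway n x id k ∨ WrapToward n x id k ∨ WrapAcross n x id k := by
  by_cases hB : ∃ p, p ≤ k ∧ x p = .branch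
  swap
  · push Not at hB
    exact (hx.wrapAway_or_wrapToward_of_forall_ne_branch hn hk hB).imp_right .inl
  obtain ⟨m, ⟨hmk, hm⟩, hfirst⟩ :
      ∃ m, (m ≤ k ∧ x m = .branch) ∧ ∀ p < m, x p ≠ .branch :=
    ⟨Nat.find hB, Nat.find_spec hB, fun p hp hb =>
      Nat.find_min hB hp ⟨(hp.trans_le (Nat.find_spec hB).1).le, hb⟩⟩
  obtain ⟨M, ⟨hMk, hM⟩, hmM, hlast⟩ : ∃ M, (M ≤ k ∧ x M = .branch) ∧ m ≤ M ∧
      ∀ p, M < p → p ≤ k → x p ≠ .branch :=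
    ⟨_, ⟨Nat.findGreatest_le k, Nat.findGreatest_spec (P := fun p => x p = .branch) hmk hm⟩,
      Nat.le_findGreatest hmk hm, fun p hp hpk => Nat.findGreatest_is_greatest hp hpk⟩
  rcases Nat.eq_zero_or_pos m with hm0 | hm0
  · obtain rfl : M = 0 := (hx.eq_of_branch_of_even hn hm hM hmM hMk (by omega)).trans hm0
    obtain ⟨ℓ, hℓ1, hℓn, h⟩ := hx.eq_cv_of_last_branch hn hM hk hlast
    exact .inl ⟨ℓ, hℓ1, hℓn, 0, fun p hp => by
      simpa only [id, zero_add] using h p (by omega)⟩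
  rcases hMk.lt_or_eq with hMk | hMk
  · exact .inr (.inr (hx.wrapAcross_of_branch_visits hn hm hM hm0 hMk hfirst hlast))
  · have hMm := hx.mod_two_eq M m (by omega) hmk (hM.trans hm.symm)
    have := hx.two_dvd
    have hMm' := hx.eq_of_branch_of_even hn hm hM hmM (by omega) (by omega)
    obtain ⟨ℓ, hℓ1, hℓn, h⟩ := hx.eq_cv_of_first_branch hn hm hm0 hmk hfirst
    exact .inr (.inl ⟨ℓ, hℓ1, hℓn, m, by omega, fun p hp => h p (by omega)⟩)

end IsWrappingWalk

section Exclusive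

variable {V : Type*} {n k : ℕ} {f : V → NOdVert} {w : ℕ → V}

lemma not_wrapAway_and_wrapToward (hk : 0 < k) : ¬ (WrapAway n f w k ∧ WrapToward n f w k) := by
  rintro ⟨⟨ℓ, -, -, j, ha⟩, ⟨ℓ', -, -, j', hj', hb⟩⟩
  have h0 := eq_of_cv_eq ((ha 0 k.zero_le).symm.trans (hb 0 k.zero_le))
  have hk' := eq_of_cv_eq ((ha k le_rfl).symm.trans (hb k le_rfl))
  omega

lemma not_wrapAway_and_wrapAcross : ¬ (WrapAway n f w k ∧ WrapAcross n f w k) := by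
  rintro ⟨⟨ℓ, -, -, j, ha⟩,
    ⟨_, _, -, -, -, -, -, j₁, _, hj₁, -, hsum, hdesc, -⟩⟩
  have := eq_of_cv_eq ((ha j₁ (by omega)).symm.trans (hdesc j₁ le_rfl))
  omega

lemma not_wrapToward_and_wrapAcross : ¬ (WrapToward n f w k ∧ WrapAcross n f w k) := by
  rintro ⟨⟨ℓ, -, -, j, hj, hb⟩,
    ⟨_, _, -, -, -, -, -, j₁, j₂, -, hj₂, hsum, hdesc, -⟩⟩
  have := eq_of_cv_eq ((hb j₁ (by omega)).symm.trans (hdesc j₁ le_rfl))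
  omega

end Exclusive

theorem stmt17_general {V : Type*} (n : ℕ) (hn : 2 ≤ n) (G : SimpleGraph V)
    (ω : V → ℝ × ℝ)
    (f : V → NOdVert) (h1 : CondC1 n ω f) (h2 : CondC2 n G f)
    (w : ℕ → V) (k : ℕ) (hw : IsWrapping n G ω w k) :
    (WrapAway n f w k ∨ WrapToward n f w k ∨ WrapAcross n f w k) ∧
    ¬ (WrapAway n f w k ∧ WrapToward n f w k) ∧
    ¬ (WrapAway n f w k ∧ WrapAcross n f w k) ∧
    ¬ (WrapToward n f w k ∧ WrapAcross n f w k) :=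
  ⟨(hw.isWrappingWalk (by omega) h1 h2).wrapAway_or_wrapToward_or_wrapAcross hn hw.1,
    not_wrapAway_and_wrapToward hw.1, not_wrapAway_and_wrapAcross,
    not_wrapToward_and_wrapAcross⟩

theorem stmt17 {V : Type*} (n : ℕ) (hn : 2 ≤ n) (G : SimpleGraph V)
    (ω : V → ℝ × ℝ) (hω : IsPlacement n G ω)
    (f : V → NOdVert) (h1 : CondC1 n ω f) (h2 : CondC2 n G f)
    (w : ℕ → V) (k : ℕ) (hw : IsWrapping n G ω w k) :
    (WrapAway n f w k ∨ WrapToward n f w k ∨ WrapAcross n f w k) ∧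
    ¬ (WrapAway n f w k ∧ WrapToward n f w k) ∧
    ¬ (WrapAway n f w k ∧ WrapAcross n f w k) ∧
    ¬ (WrapToward n f w k ∧ WrapAcross n f w k) :=
  stmt17_general n hn G ω f h1 h2 w k hw
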